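/- Let H be a real Hilbert space, let r ≥ 1, and let C₁, …, C_r ⊆ H be nonempty closed convex sets. In the product Hilbert space H^r, let C = C₁ × ⋯ × C_r and let D = {(x, x, …, x) : x ∈ H} be the diagonal subspace. Then for every x ∈ ⋂_{i=1}^r C_i, writing 𝐱 = (x, x, …, x) ∈ C ∩ D, one has (N_C(𝐱) + N_D(𝐱)) ∩ D = (Σ_{i=1}^r N_{C_i}(x))^r ∩ D, where (Σ_{i=1}^r N_{C_i}(x))^r denotes the r-fold product of the Minkowski sum Σ_{i=1}^r N_{C_i}(x). -/

import Mathlib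

/-!
Both normal cones in `H^r` are computed coordinatewise: `N_C(𝐱) = ∏ᵢ N_{Cᵢ}(x)` (test against
points of `C` that differ from `𝐱` in one coordinate) and `N_D(𝐱) = {𝐯 | ∑ᵢ vᵢ = 0}` (test against
`(x + ∑ᵢ vᵢ, …)`). Hence `(z,…,z) = 𝐮 + 𝐯` forces `∑ᵢ uᵢ = r • z`, so `z = ∑ᵢ r⁻¹ • uᵢ` with
`r⁻¹ • uᵢ ∈ N_{Cᵢ}(x)`; conversely `z = ∑ᵢ dᵢ` splits as `(r • dᵢ)ᵢ + (z - r • dᵢ)ᵢ`.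
-/

open RealInnerProductSpace Pointwise

/-- The normal cone to a convex set `C` at `x` (empty when `x ∉ C`), in any real
inner product space. -/
def normalCone {E : Type*} [NormedAddCommGroup E] [InnerProductSpace ℝ E]
    (C : Set E) (x : E) : Set E :=
  {u | x ∈ C ∧ ∀ c ∈ C, ⟪u, c - x⟫ ≤ 0}

section NormalCone

variable {ι : Type*} [Fintype ι] {E : Type*} [NormedAddCommGroup E] [InnerProductSpace ℝ E]

lemma smul_mem_normalCone {C : Set E} {x u : E} (hu : u ∈ normalCone C x) {t : ℝ}
    (ht : 0 ≤ t) : t • u ∈ normalCone C x := by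
  refine ⟨hu.1, fun c hc => ?_⟩
  rw [real_inner_smul_left]
  exact mul_nonpos_of_nonneg_of_nonpos ht (hu.2 c hc)

lemma mem_normalCone_pi_iff {F : ι → Type*} [∀ i, NormedAddCommGroup (F i)]
    [∀ i, InnerProductSpace ℝ (F i)] {C : ∀ i, Set (F i)} {p u : PiLp 2 F} :
    u ∈ normalCone {f : PiLp 2 F | ∀ i, f i ∈ C i} p ↔ ∀ i, u i ∈ normalCone (C i) (p i) := by
  classical
  constructor
  · rintro ⟨hp, hu⟩ i
    refine ⟨hp i, fun c hc => ?_⟩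
    have hupdate :
        WithLp.toLp 2 (Function.update p.ofLp i c) ∈ {f : PiLp 2 F | ∀ i, f i ∈ C i} := by
      intro k
      rcases eq_or_ne k i with rfl | hk
      · simpa using hc
      · simpa [Function.update_of_ne hk] using hp k
    have h := hu _ hupdate
    rw [PiLp.inner_apply, Finset.sum_eq_single i (fun k _ hk => by simp [hk]) (by simp)] at h
    simpa using h
  · intro hu
    refine ⟨fun i => (hu i).1, fun c hc => ?_⟩
    rw [PiLp.inner_apply]
    exact Finset.sum_nonpos fun i _ => (hu i).2 (c i) (hc i)

lemma inner_toLp_const_right (v : PiLp 2 (fun _ : ι => E)) (y : E) :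
    ⟪v, WithLp.toLp 2 (fun _ => y)⟫ = ⟪∑ i, v i, y⟫ := by
  rw [PiLp.inner_apply, sum_inner]

lemma mem_normalCone_diagonal_iff {x : E} {v : PiLp 2 (fun _ : ι => E)} :
    v ∈ normalCone {f : PiLp 2 (fun _ : ι => E) | ∃ z : E, ∀ i, f i = z}
        (WithLp.toLp 2 (fun _ => x)) ↔ ∑ i, v i = 0 := by
  constructor
  · rintro ⟨-, hv⟩
    have h := hv (WithLp.toLp 2 (fun _ => x + ∑ i, v i)) ⟨_, fun _ => rfl⟩
    change ⟪v, WithLp.toLp 2 (fun _ => x + ∑ i, v i - x)⟫ ≤ 0 at h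
    rw [inner_toLp_const_right, add_sub_cancel_left] at h
    exact real_inner_self_nonpos.mp h
  · refine fun hv => ⟨⟨x, fun _ => rfl⟩, ?_⟩
    rintro c ⟨w, hw⟩
    obtain rfl : c = WithLp.toLp 2 (fun _ => w) := by ext i; exact hw i
    change ⟪v, WithLp.toLp 2 (fun _ => w - x)⟫ ≤ 0
    rw [inner_toLp_const_right, hv, inner_zero_left]

lemma toLp_const_mem_normalCone_pi_add_normalCone_diagonal_iff [Nonempty ι]
    {C : ι → Set E} {x z : E} :
    WithLp.toLp 2 (fun _ => z) ∈
        normalCone {f : PiLp 2 (fun _ : ι => E) | ∀ i, f i ∈ C i} (WithLp.toLp 2 (fun _ => x)) +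
          normalCone {f : PiLp 2 (fun _ : ι => E) | ∃ z : E, ∀ i, f i = z}
            (WithLp.toLp 2 (fun _ => x)) ↔
      ∃ d : ι → E, (∀ j, d j ∈ normalCone (C j) x) ∧ z = ∑ j, d j := by
  have hcard : (Fintype.card ι : ℝ) ≠ 0 := Nat.cast_ne_zero.mpr Fintype.card_ne_zero
  constructor
  · rintro ⟨u, hu, v, hv, huv⟩
    rw [mem_normalCone_pi_iff] at hu
    rw [mem_normalCone_diagonal_iff] at hv
    have hsum : ∑ j, u j = (Fintype.card ι : ℝ) • z := by
      have h := Finset.sum_congr rfl fun i (_ : i ∈ Finset.univ) => congrArg (· i) huv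
      simpa [Finset.sum_add_distrib, hv, Nat.cast_smul_eq_nsmul] using h
    refine ⟨fun j => (Fintype.card ι : ℝ)⁻¹ • u j,
      fun j => smul_mem_normalCone (hu j) (by positivity), ?_⟩
    rw [← Finset.smul_sum, hsum, inv_smul_smul₀ hcard]
  · rintro ⟨d, hd, rfl⟩
    set u : PiLp 2 (fun _ : ι => E) := WithLp.toLp 2 (fun j => (Fintype.card ι : ℝ) • d j)
    refine ⟨u, mem_normalCone_pi_iff.2 fun j => smul_mem_normalCone (hd j) (by positivity),
      WithLp.toLp 2 (fun _ => ∑ j, d j) - u, mem_normalCone_diagonal_iff.2 ?_, add_sub_cancel _ _⟩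
    simp [u, Finset.sum_sub_distrib, Finset.smul_sum, Nat.cast_smul_eq_nsmul]

theorem normalCone_pi_add_normalCone_diagonal_inter_diagonal (C : ι → Set E) (x : E) :
    (normalCone {f : PiLp 2 (fun _ : ι => E) | ∀ i, f i ∈ C i} (WithLp.toLp 2 (fun _ => x)) +
        normalCone {f : PiLp 2 (fun _ : ι => E) | ∃ z : E, ∀ i, f i = z}
          (WithLp.toLp 2 (fun _ => x))) ∩
      {f : PiLp 2 (fun _ : ι => E) | ∃ z : E, ∀ i, f i = z} =
    {f : PiLp 2 (fun _ : ι => E) |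
        ∀ i, f i ∈ {u : E | ∃ d : ι → E, (∀ j, d j ∈ normalCone (C j) x) ∧ u = ∑ j, d j}} ∩
      {f : PiLp 2 (fun _ : ι => E) | ∃ z : E, ∀ i, f i = z} := by
  ext f
  simp only [Set.mem_inter_iff]
  refine and_congr_left ?_
  rintro ⟨z, hz⟩
  obtain rfl : f = WithLp.toLp 2 (fun _ => z) := by ext i; exact hz i
  cases isEmpty_or_nonempty ι
  · exact iff_of_true ⟨_, mem_normalCone_pi_iff.2 isEmptyElim, 0,
      mem_normalCone_diagonal_iff.2 (by simp), add_zero _⟩ isEmptyElim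
  · simp only [toLp_const_mem_normalCone_pi_add_normalCone_diagonal_iff, Set.mem_ofPred_eq,
      forall_const]

end NormalCone

theorem stmt_19_general {H : Type*} [NormedAddCommGroup H] [InnerProductSpace ℝ H]
    (r : ℕ) (C : Fin r → Set H)
    (x : H) :
    (normalCone {f : PiLp 2 (fun _ : Fin r => H) | ∀ i, f i ∈ C i} (WithLp.toLp 2 (fun _ => x)) +
        normalCone {f : PiLp 2 (fun _ : Fin r => H) | ∃ z : H, ∀ i, f i = z} (WithLp.toLp 2 (fun _ => x))) ∩
      {f : PiLp 2 (fun _ : Fin r => H) | ∃ z : H, ∀ i, f i = z} =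
    {f : PiLp 2 (fun _ : Fin r => H) |
        ∀ i, f i ∈ {u : H | ∃ d : Fin r → H,
          (∀ j, d j ∈ normalCone (C j) x) ∧ u = ∑ j, d j}} ∩
      {f : PiLp 2 (fun _ : Fin r => H) | ∃ z : H, ∀ i, f i = z} :=
  normalCone_pi_add_normalCone_diagonal_inter_diagonal C x

/-- In the product Hilbert space `H^r`, with `C = C₁ × ⋯ × C_r` and `D`
the diagonal, for every `x ∈ ⋂ᵢ Cᵢ` (writing `𝐱 = (x,…,x)`):
`(N_C(𝐱) + N_D(𝐱)) ∩ D = (Σᵢ N_{Cᵢ}(x))^r ∩ D`. -/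
theorem stmt_19 {H : Type*} [NormedAddCommGroup H] [InnerProductSpace ℝ H] [CompleteSpace H]
    (r : ℕ) (hr : 1 ≤ r) (C : Fin r → Set H)
    (hCne : ∀ i, (C i).Nonempty) (hCc : ∀ i, IsClosed (C i)) (hCv : ∀ i, Convex ℝ (C i))
    (x : H) (hx : ∀ i, x ∈ C i) :
    (normalCone {f : PiLp 2 (fun _ : Fin r => H) | ∀ i, f i ∈ C i} (WithLp.toLp 2 (fun _ => x)) +
        normalCone {f : PiLp 2 (fun _ : Fin r => H) | ∃ z : H, ∀ i, f i = z} (WithLp.toLp 2 (fun _ => x))) ∩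
      {f : PiLp 2 (fun _ : Fin r => H) | ∃ z : H, ∀ i, f i = z} =
    {f : PiLp 2 (fun _ : Fin r => H) |
        ∀ i, f i ∈ {u : H | ∃ d : Fin r → H,
          (∀ j, d j ∈ normalCone (C j) x) ∧ u = ∑ j, d j}} ∩
      {f : PiLp 2 (fun _ : Fin r => H) | ∃ z : H, ∀ i, f i = z} :=
  stmt_19_general r C x
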